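/- Let Ψ : ℝ → ℝ be a nonnegative convex function vanishing only at 0, with ∫ exp(-λΨ(t)) dt < ∞ for all λ > 0. Then the map R(λ) = (∫ Ψ e^{-λΨ}) / (∫ e^{-λΨ}) satisfies lim_{λ→∞} R(λ) = 0. -/

import Mathlib

open MeasureTheory Real Filter Set Topology

/-!
Fix `e > 0`. Where `Ψ ≤ e` the numerator's integrand is at most `e` times the denominator's; where
`Ψ > e`, the inequality `Ψ ≤ exp Ψ` gives `Ψ e^{-λΨ} ≤ e^{-(λ-2)e} e^{-Ψ}`. The denominator is at
least `e^{-λe/2} |{Ψ ≤ e/2}|`, and this set has positive measure because `Ψ` is continuous and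
vanishes at `0`. Hence the ratio is at most `e + O(e^{-λe/2})`.
-/

lemma setOf_exp_neg_mul_le {α : Type*} {f : α → ℝ} {l : ℝ} (hl : 0 < l) (e : ℝ) :
    {x | exp (-l * e) ≤ exp (-l * f x)} = {x | f x ≤ e} := by
  ext x
  simp only [mem_ofPred_eq, exp_le_exp, neg_mul, neg_le_neg_iff]
  exact mul_le_mul_iff_right₀ hl

section

variable {α : Type*} [MeasurableSpace α] {μ : Measure α} {f : α → ℝ} {l : ℝ}

lemma mul_exp_neg_mul_le (s : ℝ) {e : ℝ} (he : 0 ≤ e) (hl : 2 ≤ l) :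
    s * exp (-l * s) ≤ e * exp (-l * s) + exp (-(l - 2) * e) * exp (-s) := by
  have hexp_s : 0 < exp (-l * s) := exp_pos _
  have hexp_e : 0 < exp (-(l - 2) * e) * exp (-s) := by positivity
  rcases le_or_gt s e with hse | hes
  · nlinarith
  · calc s * exp (-l * s) ≤ exp s * exp (-l * s) := by
          gcongr; linarith [add_one_le_exp s]
      _ = exp (-(l - 2) * s) * exp (-s) := by rw [← exp_add, ← exp_add]; ring_nf
      _ ≤ exp (-(l - 2) * e) * exp (-s) := by gcongr exp ?_ * _; nlinarith
      _ ≤ e * exp (-l * s) + exp (-(l - 2) * e) * exp (-s) := by nlinarith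

lemma integrable_mul_exp_neg_mul (hf : AEStronglyMeasurable f μ) (hf₀ : 0 ≤ᵐ[μ] f)
    (hint : Integrable (fun x => exp (-(l - 1) * f x)) μ) :
    Integrable (fun x => f x * exp (-l * f x)) μ := by
  refine hint.mono
    (hf.mul (continuous_exp.comp_aestronglyMeasurable (hf.const_mul (-l)))) ?_
  filter_upwards [hf₀] with x hx
  rw [norm_of_nonneg (mul_nonneg hx (exp_pos _).le), norm_of_nonneg (exp_pos _).le]
  calc f x * exp (-l * f x) ≤ exp (f x) * exp (-l * f x) := by
        gcongr; linarith [add_one_le_exp (f x)]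
    _ = exp (-(l - 1) * f x) := by rw [← exp_add]; ring_nf

lemma measure_setOf_le_lt_top (hint : Integrable (fun x => exp (-l * f x)) μ) (hl : 0 < l)
    (e : ℝ) : μ {x | f x ≤ e} < ⊤ := by
  simpa only [setOf_exp_neg_mul_le hl] using hint.measure_ge_lt_top (exp_pos (-l * e))

lemma exp_mul_measureReal_le_integral (hint : Integrable (fun x => exp (-l * f x)) μ)
    (hl : 0 < l) (e : ℝ) :
    exp (-l * e) * μ.real {x | f x ≤ e} ≤ ∫ x, exp (-l * f x) ∂μ := by
  simpa only [setOf_exp_neg_mul_le hl] using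
    mul_meas_ge_le_integral_of_nonneg (ae_of_all _ fun x => (exp_pos _).le) hint (exp (-l * e))

lemma integral_mul_exp_neg_mul_le (hf : AEStronglyMeasurable f μ) (hf₀ : 0 ≤ᵐ[μ] f)
    (hint : ∀ l : ℝ, 0 < l → Integrable (fun x => exp (-l * f x)) μ) {e : ℝ} (he : 0 ≤ e)
    (hl : 2 ≤ l) :
    ∫ x, f x * exp (-l * f x) ∂μ ≤
      e * ∫ x, exp (-l * f x) ∂μ + exp (-(l - 2) * e) * ∫ x, exp (-f x) ∂μ := by
  have hint_l := hint l (by linarith)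
  have hint_1 : Integrable (fun x => exp (-f x)) μ := by simpa using hint 1 one_pos
  rw [← integral_const_mul, ← integral_const_mul,
    ← integral_add (hint_l.const_mul e) (hint_1.const_mul _)]
  exact integral_mono (integrable_mul_exp_neg_mul hf hf₀ (hint _ (by linarith)))
    ((hint_l.const_mul e).add (hint_1.const_mul _)) fun x => mul_exp_neg_mul_le _ he hl

lemma integral_mul_exp_div_integral_exp_le (hf : AEStronglyMeasurable f μ) (hf₀ : 0 ≤ᵐ[μ] f)
    (hint : ∀ l : ℝ, 0 < l → Integrable (fun x => exp (-l * f x)) μ) {e : ℝ} (he : 0 ≤ e)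
    (hpos : 0 < μ {x | f x ≤ e / 2}) (hl : 2 ≤ l) :
    (∫ x, f x * exp (-l * f x) ∂μ) / ∫ x, exp (-l * f x) ∂μ ≤
      e + (∫ x, exp (-f x) ∂μ) / μ.real {x | f x ≤ e / 2} * exp (2 * e - l * (e / 2)) := by
  set D := ∫ x, exp (-l * f x) ∂μ
  set C := ∫ x, exp (-f x) ∂μ
  set m := μ.real {x | f x ≤ e / 2}
  have hm : 0 < m :=
    ENNReal.toReal_pos hpos.ne' (measure_setOf_le_lt_top (hint 1 one_pos) one_pos _).ne
  have hD : exp (-l * (e / 2)) * m ≤ D :=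
    exp_mul_measureReal_le_integral (hint l (by linarith)) (by linarith) _
  have hD₀ : 0 < D := lt_of_lt_of_le (by positivity) hD
  have hC : 0 ≤ C := integral_nonneg fun x => (exp_pos _).le
  calc (∫ x, f x * exp (-l * f x) ∂μ) / D ≤ (e * D + exp (-(l - 2) * e) * C) / D := by
        gcongr; exact integral_mul_exp_neg_mul_le hf hf₀ hint he hl
    _ = e + exp (-(l - 2) * e) * C / D := by field_simp
    _ ≤ e + exp (-(l - 2) * e) * C / (exp (-l * (e / 2)) * m) := by gcongr
    _ = e + C / m * exp (2 * e - l * (e / 2)) := by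
        rw [show 2 * e - l * (e / 2) = -(l - 2) * e - (-l * (e / 2)) by ring, exp_sub]
        field_simp

theorem tendsto_integral_mul_exp_div_integral_exp (hf : AEStronglyMeasurable f μ)
    (hf₀ : 0 ≤ᵐ[μ] f) (hint : ∀ l : ℝ, 0 < l → Integrable (fun x => exp (-l * f x)) μ)
    (hpos : ∀ e : ℝ, 0 < e → 0 < μ {x | f x ≤ e}) :
    Tendsto (fun l : ℝ => (∫ x, f x * exp (-l * f x) ∂μ) / ∫ x, exp (-l * f x) ∂μ)
      atTop (𝓝 0) := by
  refine tendsto_order.2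
    ⟨fun a ha => Eventually.of_forall fun l => ha.trans_le ?_, fun a ha => ?_⟩
  · exact div_nonneg
      (integral_nonneg_of_ae (hf₀.mono fun x hx => mul_nonneg hx (exp_pos _).le))
      (integral_nonneg fun x => (exp_pos _).le)
  set e := a / 2
  have he : 0 < e := half_pos ha
  set K := (∫ x, exp (-f x) ∂μ) / μ.real {x | f x ≤ e / 2}
  have hdecay : Tendsto (fun l : ℝ => K * exp (2 * e - l * (e / 2))) atTop (𝓝 0) := by
    simpa [sub_eq_add_neg] using (tendsto_exp_atBot.comp <| tendsto_atBot_add_const_left _ _ <|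
      tendsto_neg_atTop_atBot.comp (tendsto_id.atTop_mul_const (half_pos he))).const_mul K
  filter_upwards [hdecay.eventually_lt_const he, eventually_ge_atTop 2] with l hl_small hl
  calc _ ≤ e + _ :=
        integral_mul_exp_div_integral_exp_le hf hf₀ hint he.le (hpos _ (half_pos he)) hl
    _ < e + e := by gcongr
    _ = a := add_halves a

end

theorem orlicz_ratio_tendsto_zero_at_infty
    (Ψ : ℝ → ℝ)
    (hconv : ConvexOn ℝ Set.univ Ψ)
    (hnonneg : ∀ x, 0 ≤ Ψ x)
    (hzero : ∀ x, Ψ x = 0 ↔ x = 0)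
    (hint : ∀ l : ℝ, 0 < l → Integrable (fun t => Real.exp (-l * Ψ t))) :
    Tendsto (fun l : ℝ =>
        (∫ t, Ψ t * Real.exp (-l * Ψ t)) / (∫ t, Real.exp (-l * Ψ t)))
      atTop (nhds 0) := by
  have hcont : Continuous Ψ := continuousOn_univ.1 (hconv.continuousOn isOpen_univ)
  refine tendsto_integral_mul_exp_div_integral_exp hcont.aestronglyMeasurable
    (ae_of_all _ hnonneg) hint fun e he => Measure.measure_pos_of_mem_nhds _ (x := 0) ?_
  exact hcont.continuousAt.preimage_mem_nhds (Iic_mem_nhds (((hzero 0).2 rfl).symm ▸ he))
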